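/- arXiv:1701.02768 — 6 statements merged into one kernel-verified Lean document; each statement's English description precedes it below -/
import Mathlib

section
/- For natural numbers n, c, d, the sum over k from 0 to n of C(n,k)^2·C(k,c)·C(n-k,d) equals C(2n-c-d, n)·C(n,c)·C(n,d). -/
/-!
Writing `n = c + d + m`, the `k`-th term vanishes unless `k = c + j` with `j ≤ m`, and then
`C(n,k) C(k,c) = C(n,c) C(d+m, j)` and `C(n,k) C(n-k,d) = C(n,d) C(c+m, m-j)`.
The sum is therefore `C(n,c) C(n,d)` times a Vandermonde convolution,
`∑ C(d+m, j) C(c+m, m-j) = C(c+d+2m, m) = C(2n-c-d, n)`.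
-/

open Finset

namespace Nat

theorem sum_range_choose_mul_choose_sub (a b m : ℕ) :
    ∑ j ∈ range (m + 1), a.choose j * b.choose (m - j) = (a + b).choose m := by
  rw [add_choose_eq, Finset.Nat.sum_antidiagonal_eq_sum_range_succ_mk]

theorem choose_mul_choose_sub {n k d : ℕ} (h : k + d ≤ n) :
    n.choose k * (n - k).choose d = n.choose d * (n - d).choose (n - k - d) := by
  rw [← choose_symm (by omega : k ≤ n), choose_mul (by omega : d ≤ n - k)]

theorem choose_sq_mul_choose_mul_choose {n k c d : ℕ} (hc : c ≤ k) (hd : k + d ≤ n) :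
    n.choose k ^ 2 * k.choose c * (n - k).choose d =
      n.choose c * n.choose d * ((n - c).choose (k - c) * (n - d).choose (n - k - d)) := by
  have hlow := choose_mul (n := n) hc
  have hhigh := choose_mul_choose_sub hd
  calc n.choose k ^ 2 * k.choose c * (n - k).choose d
      = (n.choose k * k.choose c) * (n.choose k * (n - k).choose d) := by ring
    _ = _ := by rw [hlow, hhigh]; ring

end Nat

theorem Finset.sum_range_eq_sum_range_shift {M : Type*} [AddCommMonoid M] {f : ℕ → M}
    {N c m : ℕ} (hN : c + m ≤ N) (hf : ∀ k ≤ N, k < c ∨ c + m < k → f k = 0) :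
    ∑ k ∈ range (N + 1), f k = ∑ j ∈ range (m + 1), f (c + j) := by
  have hsub : Ico c (c + m + 1) ⊆ range (N + 1) := by
    intro k hk; simp only [mem_Ico, mem_range] at *; omega
  rw [← sum_subset hsub, sum_Ico_eq_sum_range, add_assoc, Nat.add_sub_cancel_left]
  intro k hk hk'
  simp only [mem_range, mem_Ico, not_and_or, not_le, not_lt] at hk hk'
  exact hf k (by omega) (by omega)

theorem stmt_1 (n c d : ℕ) :
    ∑ k ∈ Finset.range (n + 1),
      (n.choose k) ^ 2 * k.choose c * (n - k).choose d =
    (2 * n - c - d).choose n * n.choose c * n.choose d := by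
  have hvanish : ∀ k ≤ n, k < c ∨ n < k + d →
      (n.choose k) ^ 2 * k.choose c * (n - k).choose d = 0 := by
    intro k hk hkcd
    simp only [mul_eq_zero, Nat.choose_eq_zero_iff]
    omega
  obtain hlt | hle := lt_or_ge n (c + d)
  · have hrhs : (2 * n - c - d).choose n * n.choose c * n.choose d = 0 := by
      simp only [mul_eq_zero, Nat.choose_eq_zero_iff]
      omega
    rw [hrhs]
    exact sum_eq_zero fun k hk ↦ hvanish k (Nat.lt_succ_iff.mp (mem_range.mp hk)) (by omega)
  obtain ⟨m, rfl⟩ := Nat.exists_eq_add_of_le hle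
  rw [Finset.sum_range_eq_sum_range_shift (by omega : c + m ≤ c + d + m)
    fun k hk hkcd ↦ hvanish k hk (by omega)]
  calc ∑ j ∈ range (m + 1), (c + d + m).choose (c + j) ^ 2 * (c + j).choose c *
          (c + d + m - (c + j)).choose d
      = ∑ j ∈ range (m + 1), (c + d + m).choose c * (c + d + m).choose d *
          ((d + m).choose j * (c + m).choose (m - j)) := by
        refine sum_congr rfl fun j hj ↦ ?_
        rw [Nat.choose_sq_mul_choose_mul_choose (by omega) (by rw [mem_range] at hj; omega)]
        congr 3 <;> omega
    _ = _ := by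
        rw [← mul_sum, Nat.sum_range_choose_mul_choose_sub,
          show 2 * (c + d + m) - c - d = d + m + (c + m) by omega,
          Nat.choose_symm_of_eq_add (by omega : d + m + (c + m) = c + d + m + m)]
        ring
end

section
/- For natural numbers a, b, m, c, d with m+a ≥ d, the sum over k from 0 to a of C(a,k)·C(b,m+k)·C(k,c)·C(m+k,d) equals C(a+b-c-d, m+a-d)·C(a,c)·C(b,d). -/
/-!
Trinomial revision rewrites `C(a,k) C(k,c)` as `C(a,c) C(a-c,a-k)` and `C(b,m+k) C(m+k,d)` as
`C(b,d) C(b-d,m+k-d)`. Since `(a-k) + (m+k-d) = m+a-d`, the remaining sum is Vandermonde's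
convolution for `C((a-c)+(b-d), m+a-d)`.
-/

open Finset

namespace Nat

theorem choose_mul_eq_choose_mul_choose_sub {n k : ℕ} (s : ℕ) (hkn : k ≤ n) :
    n.choose k * k.choose s = n.choose s * (n - s).choose (n - k) := by
  by_cases hsk : s ≤ k
  · rw [choose_mul hsk, ← choose_symm (by omega : k - s ≤ n - s)]
    congr 2
    omega
  rcases le_or_gt s n with hsn | hns
  · simp [choose_eq_zero_of_lt (by omega : k < s), choose_eq_zero_of_lt (by omega : n - s < n - k)]
  · simp [choose_eq_zero_of_lt (by omega : k < s), choose_eq_zero_of_lt hns]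

section

variable (a b c d : ℕ)

theorem choose_mul_choose_mul_choose_sub_sub_eq_sum_antidiagonal (n : ℕ) :
    a.choose c * b.choose d * (a + b - c - d).choose n =
      ∑ ij ∈ antidiagonal n,
        a.choose c * (a - c).choose ij.1 * (b.choose d * (b - d).choose ij.2) := by
  by_cases hca : c ≤ a
  · by_cases hdb : d ≤ b
    · rw [show a + b - c - d = (a - c) + (b - d) by omega, add_choose_eq, mul_sum]
      exact sum_congr rfl fun _ _ ↦ by ring
    · simp [choose_eq_zero_of_lt (not_le.1 hdb)]
  · simp [choose_eq_zero_of_lt (not_le.1 hca)]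

theorem choose_mul_choose_mul_choose_mul_choose_eq {m k : ℕ} (hka : k ≤ a) (hdk : d ≤ m + k) :
    a.choose k * b.choose (m + k) * k.choose c * (m + k).choose d =
      a.choose c * (a - c).choose (a - k) * (b.choose d * (b - d).choose (m + k - d)) := by
  rw [← choose_mul_eq_choose_mul_choose_sub c hka, ← choose_mul hdk]
  ring

end

end Nat

theorem stmt_4 (a b m c d : ℕ) (h : m + a ≥ d) :
    ∑ k ∈ Finset.range (a + 1),
      a.choose k * b.choose (m + k) * k.choose c * (m + k).choose d =
    (a + b - c - d).choose (m + a - d) * a.choose c * b.choose d := by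
  rw [mul_rotate, Nat.choose_mul_choose_mul_choose_sub_sub_eq_sum_antidiagonal]
  have hdk : ∀ k, a.choose k * b.choose (m + k) * k.choose c * (m + k).choose d ≠ 0 →
      d ≤ m + k :=
    fun k hne ↦ not_lt.1 fun hlt ↦ hne (by rw [Nat.choose_eq_zero_of_lt hlt, mul_zero])
  refine sum_bij_ne_zero (fun k _ _ ↦ (a - k, m + k - d)) ?_ ?_ ?_ ?_
  · intro k hk hne
    rw [mem_range] at hk
    rw [HasAntidiagonal.mem_antidiagonal]
    have := hdk k hne
    omega
  · intro k₁ hk₁ _ k₂ hk₂ _ heq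
    rw [mem_range] at hk₁ hk₂
    simp only [Prod.mk.injEq] at heq
    omega
  · rintro ⟨i, j⟩ hij hne
    rw [HasAntidiagonal.mem_antidiagonal] at hij
    have hi : i ≤ a - c := not_lt.1 fun hlt ↦ hne (by simp [Nat.choose_eq_zero_of_lt hlt])
    refine ⟨a - i, mem_range.2 (by omega), ?_, by simp only [Prod.mk.injEq]; omega⟩
    rw [Nat.choose_mul_choose_mul_choose_mul_choose_eq a b c d (by omega) (by omega)]
    convert hne using 4 <;> omega
  · intro k hk hne
    exact Nat.choose_mul_choose_mul_choose_mul_choose_eq a b c d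
      (Nat.lt_succ_iff.1 (mem_range.1 hk)) (hdk k hne)
end

section
/- For natural numbers n, c, d, the sum over k from 0 to n of C(n,k)^2·C(k,c)·C(k,d) equals C(2n-c-d, n-d)·C(n,c)·C(n,d). -/
/-! Since `C(n,k) C(k,c) = C(n,c) C(n-c,n-k)` for `k ≤ n`, each summand factors as
`C(n,c) C(n,d) · C(n-c,n-k) C(n-d,n-k)`, and after reflecting `k ↦ n - k` the remaining sum is
Vandermonde's `∑ j, C(a,j) C(b,j) = C(a+b,b)` with `a = n-c`, `b = n-d`. -/

open Finset Finset.Nat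

namespace Nat

theorem choose_mul_choose_eq_choose_mul_choose_sub {n k s : ℕ} (hkn : k ≤ n) :
    n.choose k * k.choose s = n.choose s * (n - s).choose (n - k) := by
  rcases le_or_gt s k with hsk | hks
  · rw [choose_mul hsk, ← choose_symm (by omega : k - s ≤ n - s)]
    congr 2
    omega
  · rcases le_or_gt s n with hsn | hns
    · rw [choose_eq_zero_of_lt hks, choose_eq_zero_of_lt (by omega : n - s < n - k), mul_zero,
        mul_zero]
    · rw [choose_eq_zero_of_lt hks, choose_eq_zero_of_lt hns, mul_zero, zero_mul]

theorem sum_range_choose_mul_choose_of_le {a b N : ℕ} (hb : b ≤ N) :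
    ∑ j ∈ range (N + 1), a.choose j * b.choose j = (a + b).choose b := by
  have htrim : ∑ j ∈ range (b + 1), a.choose j * b.choose j =
      ∑ j ∈ range (N + 1), a.choose j * b.choose j :=
    sum_subset (range_subset_range.mpr (by omega)) fun j _ hj => by
      rw [choose_eq_zero_of_lt (n := b) (by simpa using hj), mul_zero]
  rw [← htrim, add_choose_eq, sum_antidiagonal_eq_sum_range_succ_mk]
  refine sum_congr rfl fun j hj => ?_
  rw [choose_symm (mem_range_succ_iff.mp hj)]

end Nat

open Nat in
theorem stmt_5 (n c d : ℕ) :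
    ∑ k ∈ Finset.range (n + 1),
      (n.choose k) ^ 2 * k.choose c * k.choose d =
    (2 * n - c - d).choose (n - d) * n.choose c * n.choose d := by
  have hfactor : ∑ k ∈ range (n + 1), (n.choose k) ^ 2 * k.choose c * k.choose d =
      n.choose c * n.choose d * ∑ j ∈ range (n + 1), (n - c).choose j * (n - d).choose j := by
    rw [← sum_range_reflect (fun j => (n - c).choose j * (n - d).choose j), mul_sum]
    refine sum_congr rfl fun k hk => ?_
    have hkn : k ≤ n := mem_range_succ_iff.mp hk
    calc (n.choose k) ^ 2 * k.choose c * k.choose d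
        = (n.choose k * k.choose c) * (n.choose k * k.choose d) := by ring
      _ = _ := by
        rw [choose_mul_choose_eq_choose_mul_choose_sub hkn,
          choose_mul_choose_eq_choose_mul_choose_sub hkn, show n + 1 - 1 - k = n - k by omega]
        ring
  rw [hfactor]
  rcases le_or_gt c n with hc | hc
  · rcases le_or_gt d n with hd | hd
    · rw [sum_range_choose_mul_choose_of_le (by omega : n - d ≤ n),
        show n - c + (n - d) = 2 * n - c - d by omega]
      ring
    · simp [choose_eq_zero_of_lt hd]
  · simp [choose_eq_zero_of_lt hc]
end

section
/- For every natural number n, the sum over k from 0 to n of C(n,k)^2·H(k) equals C(2n,n)·(2·H(n) - H(2n)), where H(m) is the m-th harmonic number. -/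
noncomputable def H (m : ℕ) : ℚ := ∑ j ∈ Finset.range m, (1 : ℚ) / (j + 1)

/-! Differentiate the falling-factorial Vandermonde identity
`(a + x)_n = Σ C(n,i) (a)_i (x)_(n-i)` in `x` and evaluate at `a = x = n`. The logarithmic
derivative of `(x)_j` at `x = k + j` is `Σ_{i<j} 1/(k+j-i) = H(k+j) - H(k)`, and
`C(n,i) (n)_i (n)_(n-i) = n! C(n,i)²`, so this yields
`Σ C(n,k)² (H n - H k) = C(2n,n) (H(2n) - H n)`; combine with `Σ C(n,k)² = C(2n,n)`. -/

open Polynomial Finset Nat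

lemma H_succ (m : ℕ) : H (m + 1) = H m + 1 / (m + 1) := by
  simp [H, sum_range_succ]

lemma sum_range_one_div_sub_eq_H_sub (k j : ℕ) :
    ∑ i ∈ range j, 1 / ((k + j : ℚ) - i) = H (k + j) - H k := by
  induction j with
  | zero => simp
  | succ j ih =>
    have hterm : ∀ i ∈ range j,
        1 / ((k + (j + 1 : ℕ) : ℚ) - (i + 1 : ℕ)) = 1 / ((k + j : ℚ) - i) :=
      fun i _ => by push_cast; ring_nf
    rw [sum_range_succ', sum_congr rfl hterm, ih, ← add_assoc, H_succ]
    push_cast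
    ring

lemma eval_derivative_descPochhammer {K : Type*} [Field K] (j : ℕ) (x : K)
    (hx : ∀ i < j, x ≠ i) :
    (derivative (descPochhammer K j)).eval x
      = (descPochhammer K j).eval x * ∑ i ∈ range j, 1 / (x - i) := by
  induction j with
  | zero => simp
  | succ j ih =>
    have hxj : x - j ≠ 0 := sub_ne_zero.mpr (hx j j.lt_succ_self)
    rw [descPochhammer_succ_eval, descPochhammer_succ_right, derivative_mul, eval_add, eval_mul,
      eval_mul, ih fun i hi => hx i (hi.trans j.lt_succ_self), sum_range_succ]
    simp only [derivative_sub, derivative_X, derivative_natCast, sub_zero, eval_sub, eval_X,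
      eval_natCast, eval_one]
    field_simp

lemma eval_natCast_derivative_descPochhammer (k j : ℕ) :
    (derivative (descPochhammer ℚ j)).eval ((k + j : ℕ) : ℚ)
      = (k + j).descFactorial j * (H (k + j) - H k) := by
  rw [eval_derivative_descPochhammer, descPochhammer_eval_eq_descFactorial]
  · push_cast
    rw [sum_range_one_div_sub_eq_H_sub]
  · intro i hi
    exact_mod_cast (by omega : k + j ≠ i)

lemma descPochhammer_eval_add {S : Type*} [CommRing S] (n : ℕ) (r s : S) :
    (descPochhammer S n).eval (r + s) = ∑ ij ∈ antidiagonal n,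
      n.choose ij.1 * ((descPochhammer S ij.1).eval r * (descPochhammer S ij.2).eval s) := by
  have h : ∀ m (x : S), (descPochhammer S m).eval x = (descPochhammer ℤ m).smeval x := by
    intro m x
    rw [← descPochhammer_map (Int.castRingHom S), eval_map, ← aeval_eq_smeval, aeval_def,
      algebraMap_int_eq]
  simp only [h]
  exact Ring.descPochhammer_smeval_add n (Commute.all r s)

lemma descPochhammer_comp_C_add_X {R : Type*} [CommRing R] (n : ℕ) (a : R) :
    (descPochhammer R n).comp (C a + X) = ∑ ij ∈ antidiagonal n,
      C (n.choose ij.1 * (descPochhammer R ij.1).eval a) * descPochhammer R ij.2 := by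
  have hmap : ∀ m, descPochhammer R[X] m = (descPochhammer R m).map C := fun m =>
    (descPochhammer_map C m).symm
  rw [comp, ← eval_map, ← hmap, descPochhammer_eval_add]
  refine sum_congr rfl fun ij _ => ?_
  rw [hmap, hmap, eval_map, eval_map, eval₂_at_apply, ← comp, comp_X, C_mul, ← C_eq_natCast]
  ring

lemma sum_choose_mul_descFactorial_mul_H_sub (n : ℕ) :
    ∑ ij ∈ antidiagonal n,
        (n.choose ij.1 * n.descFactorial ij.1 * n.descFactorial ij.2 : ℚ) * (H n - H ij.1)
      = (n + n).descFactorial n * (H (n + n) - H n) := by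
  have h := congrArg (fun p => (derivative p).eval (n : ℚ))
    (descPochhammer_comp_C_add_X n (n : ℚ))
  simp only [derivative_comp, derivative_add, derivative_C, derivative_X, zero_add,
    derivative_sum, derivative_C_mul, eval_mul, eval_one, eval_comp, eval_add, eval_X, eval_C,
    eval_finsetSum] at h
  rw [one_mul, ← Nat.cast_add, eval_natCast_derivative_descPochhammer] at h
  rw [h]
  refine sum_congr rfl fun ⟨i, j⟩ hij => ?_
  rw [HasAntidiagonal.mem_antidiagonal] at hij
  subst hij
  rw [descPochhammer_eval_eq_descFactorial, eval_natCast_derivative_descPochhammer]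
  ring

lemma choose_mul_descFactorial_mul_descFactorial (i j : ℕ) :
    (i + j).choose i * (i + j).descFactorial i * (i + j).descFactorial j
      = (i + j)! * (i + j).choose i ^ 2 := by
  rw [Nat.descFactorial_eq_factorial_mul_choose, Nat.descFactorial_eq_factorial_mul_choose,
    ← Nat.choose_symm_add, ← Nat.add_choose_mul_factorial_mul_factorial i j,
    Nat.choose_symm_add]
  ring

lemma sum_range_choose_sq_mul_H_sub (n : ℕ) :
    ∑ k ∈ range (n + 1), (n.choose k : ℚ) ^ 2 * (H n - H k)
      = ((2 * n).choose n : ℚ) * (H (2 * n) - H n) := by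
  have h := sum_choose_mul_descFactorial_mul_H_sub n
  have hterm : ∀ ij ∈ antidiagonal n,
      (n.choose ij.1 * n.descFactorial ij.1 * n.descFactorial ij.2 : ℚ) * (H n - H ij.1)
        = n ! * ((n.choose ij.1 : ℚ) ^ 2 * (H n - H ij.1)) := by
    rintro ⟨i, j⟩ hij
    rw [HasAntidiagonal.mem_antidiagonal] at hij
    subst hij
    have e : ((i + j).choose i * (i + j).descFactorial i * (i + j).descFactorial j : ℚ)
        = (i + j)! * (i + j).choose i ^ 2 := by
      exact_mod_cast choose_mul_descFactorial_mul_descFactorial i j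
    rw [e, mul_assoc]
  rw [sum_congr rfl hterm, ← mul_sum, Nat.sum_antidiagonal_eq_sum_range_succ_mk,
    Nat.descFactorial_eq_factorial_mul_choose, ← two_mul] at h
  push_cast at h
  exact mul_left_cancel₀ (by positivity) (h.trans (mul_assoc _ _ _))

theorem stmt_8 (n : ℕ) :
    ∑ k ∈ Finset.range (n + 1), (n.choose k : ℚ) ^ 2 * H k =
    ((2 * n).choose n : ℚ) * (2 * H n - H (2 * n)) := by
  have hsq : ∑ k ∈ range (n + 1), (n.choose k : ℚ) ^ 2 = (2 * n).choose n := by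
    exact_mod_cast Nat.sum_range_choose_sq n
  calc ∑ k ∈ range (n + 1), (n.choose k : ℚ) ^ 2 * H k
      = (∑ k ∈ range (n + 1), (n.choose k : ℚ) ^ 2) * H n
          - ∑ k ∈ range (n + 1), (n.choose k : ℚ) ^ 2 * (H n - H k) := by
        rw [sum_mul, ← sum_sub_distrib]
        exact sum_congr rfl fun k _ => by ring
    _ = ((2 * n).choose n : ℚ) * (2 * H n - H (2 * n)) := by
        rw [hsq, sum_range_choose_sq_mul_H_sub]
        ring
end

section
/- For every natural number n ≥ 2, the sum over k from 0 to n of C(n,k)^2·k^4 equals C(2n,n)·n^3·(n^3 + n^2 - 3n - 1)/(4(2n-1)(2n-3)), as an identity of rational numbers. -/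
/-!
Since `k * C(n, k) = n * C(n - 1, k - 1)`, two of the four factors `k` can be absorbed into the
binomial coefficients, which reduces `∑ C(n, k)² k⁴` to the moments `∑ C(m, i)² iʲ`, `j ≤ 2`,
for `m = n - 1`. These are central binomial coefficients by Vandermonde's identity
(`j = 0`), the symmetry `i ↦ m - i` (`j = 1`) and the same absorption once more (`j = 2`).
The recurrence `(m + 1) C(2m + 2, m + 1) = 2 (2m + 1) C(2m, m)` then expresses everything
through `C(2n, n)`.
-/

open Finset

namespace Nat

theorem two_mul_sum_range_mul_choose_sq (n : ℕ) :
    2 * ∑ i ∈ range (n + 1), i * n.choose i ^ 2 = n * centralBinom n := by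
  have reflect : ∑ i ∈ range (n + 1), i * n.choose i ^ 2 =
      ∑ i ∈ range (n + 1), (n - i) * n.choose i ^ 2 := by
    rw [← sum_range_reflect]
    refine sum_congr rfl fun i hi => ?_
    have hi : i ≤ n := mem_range_succ_iff.mp hi
    rw [add_tsub_cancel_right, choose_symm hi]
  calc 2 * ∑ i ∈ range (n + 1), i * n.choose i ^ 2
      = ∑ i ∈ range (n + 1), i * n.choose i ^ 2 +
          ∑ i ∈ range (n + 1), (n - i) * n.choose i ^ 2 := by rw [two_mul, ← reflect]
    _ = ∑ i ∈ range (n + 1), (i + (n - i)) * n.choose i ^ 2 := by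
        rw [← sum_add_distrib]; simp only [add_mul]
    _ = n * centralBinom n := by
        rw [centralBinom_eq_two_mul_choose, ← sum_range_choose_sq, mul_sum]
        exact sum_congr rfl fun i hi => by rw [add_tsub_cancel_of_le (mem_range_succ_iff.mp hi)]

theorem sum_range_choose_sq_mul_sq_mul (n : ℕ) (f : ℕ → ℕ) :
    ∑ k ∈ range (n + 2), (n + 1).choose k ^ 2 * k ^ 2 * f k =
      (n + 1) ^ 2 * ∑ i ∈ range (n + 1), n.choose i ^ 2 * f (i + 1) := by
  rw [sum_range_succ', mul_sum]
  simp only [zero_pow two_ne_zero, mul_zero, zero_mul, add_zero]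
  refine sum_congr rfl fun i _ => ?_
  calc (n + 1).choose (i + 1) ^ 2 * (i + 1) ^ 2 * f (i + 1)
      = ((n + 1).choose (i + 1) * (i + 1)) ^ 2 * f (i + 1) := by ring
    _ = (n + 1) ^ 2 * (n.choose i ^ 2 * f (i + 1)) := by rw [← add_one_mul_choose_eq]; ring

theorem sum_range_choose_sq_mul_sq (n : ℕ) :
    ∑ k ∈ range (n + 2), (n + 1).choose k ^ 2 * k ^ 2 = (n + 1) ^ 2 * centralBinom n := by
  simpa [centralBinom_eq_two_mul_choose, sum_range_choose_sq]
    using sum_range_choose_sq_mul_sq_mul n fun _ => 1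

theorem sum_range_choose_sq_mul_pow_four (n : ℕ) :
    ∑ k ∈ range (n + 3), (n + 2).choose k ^ 2 * k ^ 4 =
      (n + 2) ^ 2 * ((n + 1) ^ 2 * centralBinom n + (n + 2) * centralBinom (n + 1)) := by
  have moment₀ := sum_range_choose_sq (n + 1)
  have moment₁ := two_mul_sum_range_mul_choose_sq (n + 1)
  have moment₂ := sum_range_choose_sq_mul_sq n
  rw [← centralBinom_eq_two_mul_choose] at moment₀
  calc ∑ k ∈ range (n + 3), (n + 2).choose k ^ 2 * k ^ 4
      = ∑ k ∈ range (n + 3), (n + 2).choose k ^ 2 * k ^ 2 * k ^ 2 :=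
        sum_congr rfl fun k _ => by ring
    _ = (n + 2) ^ 2 * ∑ i ∈ range (n + 2), (n + 1).choose i ^ 2 * (i + 1) ^ 2 :=
        sum_range_choose_sq_mul_sq_mul (n + 1) (· ^ 2)
    _ = (n + 2) ^ 2 * (∑ i ∈ range (n + 2), (n + 1).choose i ^ 2 * i ^ 2 +
          2 * ∑ i ∈ range (n + 2), i * (n + 1).choose i ^ 2 +
          ∑ i ∈ range (n + 2), (n + 1).choose i ^ 2) := by
        simp only [mul_sum, ← sum_add_distrib]
        exact sum_congr rfl fun i _ => by ring
    _ = _ := by rw [moment₀, moment₁, moment₂]; ring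

end Nat

theorem stmt_17 (n : ℕ) (hn : 2 ≤ n) :
    ∑ k ∈ Finset.range (n + 1), (n.choose k : ℚ) ^ 2 * (k : ℚ) ^ 4 =
    ((2 * n).choose n : ℚ) * (n : ℚ) ^ 3 *
      ((n : ℚ) ^ 3 + (n : ℚ) ^ 2 - 3 * n - 1) /
      (4 * (2 * (n : ℚ) - 1) * (2 * (n : ℚ) - 3)) := by
  obtain ⟨m, rfl⟩ : ∃ m, n = m + 2 := ⟨n - 2, by omega⟩
  have sum_eq := congrArg (Nat.cast : ℕ → ℚ) (Nat.sum_range_choose_sq_mul_pow_four m)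
  have rec₀ := congrArg (Nat.cast : ℕ → ℚ) (Nat.succ_mul_centralBinom_succ m)
  have rec₁ := congrArg (Nat.cast : ℕ → ℚ) (Nat.succ_mul_centralBinom_succ (m + 1))
  push_cast at sum_eq rec₀ rec₁
  rw [show m + 1 + 1 = m + 2 from rfl] at rec₁
  rw [← Nat.centralBinom_eq_two_mul_choose, eq_div_iff (by push_cast; ring_nf; positivity)]
  push_cast
  linear_combination (4 * (2 * ((m : ℚ) + 2) - 1) * (2 * (m + 2) - 3)) * sum_eq -
    2 * ((m : ℚ) + 2) ^ 2 * (2 * m + 3) * (m + 1) ^ 2 * rec₀ -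
    ((m : ℚ) + 2) ^ 2 * ((m + 2) ^ 3 + (m + 2) ^ 2 - 3 * (m + 2) - 1) * rec₁
end

section
/- For every natural number n ≥ 3, the sum over k from 0 to n of C(n,k)^2·k^6 equals C(2n,n)·n^3·(n^6 + 3n^5 - 13n^4 - 15n^3 + 30n^2 + 8n - 2)/(8(2n-1)(2n-3)(2n-5)), as an identity of rational numbers. -/
/-!
Expand `k ^ 6` in falling factorials, `k ^ 6 = ∑ⱼ S(6, j) k⁽ʲ⁾` with Stirling numbers of the
second kind. Since `C(n, k) k⁽ʲ⁾ = n⁽ʲ⁾ C(n - j, n - k)`, Vandermonde's identity collapses each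
falling-factorial moment to `∑ₖ C(n, k)² k⁽ʲ⁾ = n⁽ʲ⁾ C(2n - j, n - j) = C(2n, n) (n⁽ʲ⁾)² / (2n)⁽ʲ⁾`
(for `j > n` both ends vanish), so the sum is `C(2n, n)` times an explicit rational function of `n`, which simplifies to the
stated closed form.
-/

open Finset

namespace Nat

theorem mul_descFactorial_eq_add (k j : ℕ) :
    k * k.descFactorial j = k.descFactorial (j + 1) + j * k.descFactorial j := by
  rcases le_or_gt j k with h | h
  · rw [descFactorial_succ, ← add_mul, Nat.sub_add_cancel h]
  · simp [descFactorial_eq_zero_iff_lt.2 h]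

theorem pow_eq_sum_stirlingSecond_mul_descFactorial (m k : ℕ) :
    k ^ m = ∑ j ∈ range (m + 1), stirlingSecond m j * k.descFactorial j := by
  induction m with
  | zero => simp
  | succ m ih =>
    have shift : ∑ j ∈ range (m + 1), stirlingSecond m j * (j * k.descFactorial j) =
        ∑ j ∈ range (m + 1), stirlingSecond m (j + 1) * ((j + 1) * k.descFactorial (j + 1)) := by
      rw [sum_range_succ', sum_range_succ, stirlingSecond_eq_zero_of_lt (lt_succ_self m)]
      simp
    calc k ^ (m + 1) = ∑ j ∈ range (m + 1), stirlingSecond m j * (k * k.descFactorial j) := by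
          rw [pow_succ, ih, sum_mul]; exact sum_congr rfl fun j _ => by ring
      _ = ∑ j ∈ range (m + 1), stirlingSecond m j * k.descFactorial (j + 1)
          + ∑ j ∈ range (m + 1), stirlingSecond m j * (j * k.descFactorial j) := by
          simp only [mul_descFactorial_eq_add, mul_add, sum_add_distrib]
      _ = _ := by
          rw [shift, ← sum_add_distrib, sum_range_succ' _ (m + 1)]
          simp only [stirlingSecond_succ_succ, stirlingSecond_succ_zero, zero_mul, add_zero]
          exact sum_congr rfl fun j _ => by ring

theorem choose_mul_descFactorial {n k : ℕ} (j : ℕ) (hk : k ≤ n) :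
    n.choose k * k.descFactorial j = n.descFactorial j * (n - j).choose (n - k) := by
  rcases le_or_gt j k with hjk | hkj
  · rw [choose_symm_of_eq_add (show n - j = n - k + (k - j) by omega),
      descFactorial_eq_factorial_mul_choose, descFactorial_eq_factorial_mul_choose,
      mul_left_comm, choose_mul hjk, mul_assoc]
  · rcases le_or_gt j n with hjn | hnj
    · rw [descFactorial_eq_zero_iff_lt.2 hkj, choose_eq_zero_of_lt (show n - j < n - k by omega),
        mul_zero, mul_zero]
    · rw [descFactorial_eq_zero_iff_lt.2 hkj, descFactorial_eq_zero_iff_lt.2 hnj, mul_zero,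
        zero_mul]

theorem sum_range_choose_sq_mul_descFactorial {n j : ℕ} (hj : j ≤ n) :
    ∑ k ∈ range (n + 1), n.choose k ^ 2 * k.descFactorial j
      = n.descFactorial j * (2 * n - j).choose (n - j) := by
  calc ∑ k ∈ range (n + 1), n.choose k ^ 2 * k.descFactorial j
      = n.descFactorial j * ∑ k ∈ range (n + 1), n.choose k * (n - j).choose (n - k) := by
        rw [mul_sum]
        refine sum_congr rfl fun k hk => ?_
        rw [sq, mul_assoc, choose_mul_descFactorial j (by simpa [Nat.lt_succ_iff] using hk)]
        ring
    _ = n.descFactorial j * (n + (n - j)).choose n := by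
        rw [add_choose_eq, Nat.sum_antidiagonal_eq_sum_range_succ_mk]
    _ = n.descFactorial j * (2 * n - j).choose (n - j) := by
        rw [choose_symm_add, show n + (n - j) = 2 * n - j by omega]

theorem descFactorial_mul_choose_sub {m n j : ℕ} (hjn : j ≤ n) :
    m.descFactorial j * (m - j).choose (n - j) = m.choose n * n.descFactorial j := by
  rw [descFactorial_eq_factorial_mul_choose, descFactorial_eq_factorial_mul_choose, mul_assoc,
    ← choose_mul hjn]
  ring

end Nat

open Nat

section CharZeroField

variable {K : Type*} [Field K] [CharZero K]

theorem sum_range_choose_sq_mul_descFactorial_eq_div {n j : ℕ} (hj : j ≤ 2 * n) :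
    ∑ k ∈ range (n + 1), (n.choose k : K) ^ 2 * k.descFactorial j
      = (2 * n).choose n * (n.descFactorial j : K) ^ 2 / (2 * n).descFactorial j := by
  rcases le_or_gt j n with hjn | hnj
  · have hD : ((2 * n).descFactorial j : K) ≠ 0 := by
      exact_mod_cast (descFactorial_pos.2 hj).ne'
    rw [eq_div_iff hD]
    have hcleared :
        (∑ k ∈ range (n + 1), n.choose k ^ 2 * k.descFactorial j) * (2 * n).descFactorial j =
          (2 * n).choose n * n.descFactorial j ^ 2 := by
      rw [sum_range_choose_sq_mul_descFactorial hjn, mul_assoc,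
        mul_comm _ ((2 * n).descFactorial j), descFactorial_mul_choose_sub hjn]
      ring
    exact_mod_cast hcleared
  · have hk (k : ℕ) (hk : k ∈ range (n + 1)) : (k.descFactorial j : K) = 0 := by
      rw [descFactorial_eq_zero_iff_lt.2 ((mem_range_succ_iff.1 hk).trans_lt hnj), cast_zero]
    rw [sum_eq_zero fun k hk' => by rw [hk k hk', mul_zero], descFactorial_eq_zero_iff_lt.2 hnj]
    simp

theorem sum_range_choose_sq_mul_pow {n m : ℕ} (hm : m ≤ 2 * n) :
    ∑ k ∈ range (n + 1), (n.choose k : K) ^ 2 * (k : K) ^ m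
      = (2 * n).choose n * ∑ j ∈ range (m + 1),
          stirlingSecond m j * (n.descFactorial j : K) ^ 2 / (2 * n).descFactorial j := by
  have hpow (k : ℕ) :
      (k : K) ^ m = ∑ j ∈ range (m + 1), (stirlingSecond m j : K) * k.descFactorial j := by
    exact_mod_cast pow_eq_sum_stirlingSecond_mul_descFactorial m k
  simp_rw [hpow, mul_sum]
  rw [sum_comm]
  refine sum_congr rfl fun j hj => ?_
  calc ∑ k ∈ range (n + 1), (n.choose k : K) ^ 2 * (stirlingSecond m j * k.descFactorial j)
      = stirlingSecond m j * ∑ k ∈ range (n + 1), (n.choose k : K) ^ 2 * k.descFactorial j := by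
        rw [mul_sum]; exact sum_congr rfl fun _ _ => by ring
    _ = _ := by
        rw [sum_range_choose_sq_mul_descFactorial_eq_div (by rw [mem_range] at hj; omega)]
        ring

end CharZeroField

theorem stmt_18 (n : ℕ) (hn : 3 ≤ n) :
    ∑ k ∈ Finset.range (n + 1), (n.choose k : ℚ) ^ 2 * (k : ℚ) ^ 6 =
    ((2 * n).choose n : ℚ) * (n : ℚ) ^ 3 *
      ((n : ℚ) ^ 6 + 3 * (n : ℚ) ^ 5 - 13 * (n : ℚ) ^ 4 - 15 * (n : ℚ) ^ 3 +
        30 * (n : ℚ) ^ 2 + 8 * n - 2) /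
      (8 * (2 * (n : ℚ) - 1) * (2 * (n : ℚ) - 3) * (2 * (n : ℚ) - 5)) := by
  rw [sum_range_choose_sq_mul_pow (by omega : 6 ≤ 2 * n)]
  simp only [sum_range_succ, sum_range_zero, ← descPochhammer_eval_eq_descFactorial ℚ,
    descPochhammer_eval_eq_prod_range, prod_range_succ, prod_range_zero]
  norm_num [stirlingSecond]
  have hn' : (3 : ℚ) ≤ n := by exact_mod_cast hn
  obtain ⟨h1, h3, h4, h5⟩ : (n : ℚ) * 2 - 1 ≠ 0 ∧
      (n : ℚ) * 2 - 3 ≠ 0 ∧ (n : ℚ) * 2 - 4 ≠ 0 ∧ (n : ℚ) * 2 - 5 ≠ 0 := by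
    refine ⟨?_, ?_, ?_, ?_⟩ <;> (intro h; linarith)
  field_simp
  ring
end
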